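/- Sobolev-type connection formula: the monic orthogonal polynomials S_n(x;q) with respect to the Sobolev-type inner product ⟨f,g⟩_λ = ⟨f,g⟩ + λ (D_q f)(α)(D_q g)(α) satisfy S_n(x;q) = H_n(x;q) - λ · ([n]_q H_{n-1}(α;q) / (1 + λ K_{n-1,q}^{(1,1)}(α,α))) · K_{n-1,q}^{(0,1)}(x,α), where K_{n-1,q}^{(i,j)}(x,y) = ∑_{k=0}^{n-1} D_q^i H_k(x;q) D_q^j H_k(y;q)/h_k. -/

import Mathlib

/-!
The Jackson q-integral against `w(x) = (qx; q)_∞ (-qx; q)_∞` obeys the q-integration by parts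
rule `∫ x p w d_qx = (1 - q) ∫ (D_q p) w d_qx`, because `w(x) = (1 - q²x²) w(qx)`. Combined with
`D_q H_{n+1} = [n+1]_q H_n` and the three-term recurrence this gives `∫ H_{n+1} w d_qx = 0`, and
Favard's argument (the recurrence moves powers of `x` onto `H`) turns that into orthogonality of
the `H_n`, with `h_{n+1} = q^n (1 - q^{n+1}) h_n > 0`.

For the Sobolev polynomial, `S_{n+1} - H_{n+1}` has degree `≤ n` and its Fourier coefficient against
`H_k` is `-λ (D_q S_{n+1})(α) (D_q H_k)(α) / h_k`, so
`S_{n+1} = H_{n+1} - λ (D_q S_{n+1})(α) K^{(0,1)}_n(·, α)`. Applying `D_q` and evaluating at `α`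
then solves for the unknown scalar `(D_q S_{n+1})(α)`.
-/

open Polynomial Filter Finset

namespace Polynomial

theorem isMonicOfDegree_of_recurrence {R : Type*} [CommRing R] [Nontrivial R] {H : ℕ → R[X]}
    (c : ℕ → R) (hH0 : H 0 = 1) (hH1 : H 1 = X)
    (hrec : ∀ n, H (n + 2) = X * H (n + 1) - C (c n) * H n) (n : ℕ) :
    IsMonicOfDegree (H n) n := by
  induction n using Nat.twoStepInduction with
  | zero => simp [hH0]
  | one => simpa [hH1] using isMonicOfDegree_X R
  | more n ih0 ih1 =>
    rw [hrec, show n + 2 = 1 + (n + 1) by omega]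
    exact ((isMonicOfDegree_X R).mul ih1).sub ((natDegree_C_mul_le _ _).trans_lt
      (by rw [ih0.natDegree_eq]; omega))

section Orthogonality

variable {R : Type*} [CommRing R]

def IsOrthogonalFamily (L : R[X] →ₗ[R] R) (H : ℕ → R[X]) : Prop :=
  ∀ (n : ℕ) (p : R[X]), p.degree < n → L (H n * p) = 0

variable {L : R[X] →ₗ[R] R} {H : ℕ → R[X]}

theorem isOrthogonalFamily_of_forall_X_pow (h : ∀ m n, m < n → L (H n * X ^ m) = 0) :
    IsOrthogonalFamily L H := by
  classical
  intro n p hp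
  have hker : degreeLT R n ≤ LinearMap.ker (L ∘ₗ LinearMap.mulLeft R (H n)) := by
    rw [degreeLT_eq_span_X_pow, Submodule.span_le, Finset.coe_image, Set.image_subset_iff]
    intro m hm
    exact h m n (Finset.mem_range.mp hm)
  exact hker (mem_degreeLT.mpr hp)

theorem mul_X_pow_succ_eq_of_recurrence (γ : ℕ → R)
    (hrec : ∀ n, H (n + 2) = X * H (n + 1) - C (γ n) * H n) (n m : ℕ) :
    H (n + 1) * X ^ (m + 1) = H (n + 2) * X ^ m + C (γ n) * (H n * X ^ m) := by
  linear_combination (-X ^ m) * hrec n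

theorem isOrthogonalFamily_of_recurrence (γ : ℕ → R)
    (hrec : ∀ n, H (n + 2) = X * H (n + 1) - C (γ n) * H n) (hL : ∀ n, L (H (n + 1)) = 0) :
    IsOrthogonalFamily L H := by
  refine isOrthogonalFamily_of_forall_X_pow fun m => ?_
  induction m with
  | zero =>
    rintro (_ | n) hn
    · omega
    · simpa using hL n
  | succ m ih =>
    rintro (_ | n) hn
    · omega
    · rw [mul_X_pow_succ_eq_of_recurrence γ hrec, map_add, ← smul_eq_C_mul, map_smul,
        ih _ (by omega), ih _ (by omega), smul_zero, add_zero]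

variable (hH : IsOrthogonalFamily L H) (hmonic : ∀ n, IsMonicOfDegree (H n) n)
include hH hmonic

theorem IsOrthogonalFamily.apply_mul_eq_zero {j k : ℕ} (hjk : j ≠ k) : L (H k * H j) = 0 := by
  rcases hjk.lt_or_gt with hjk | hjk
  · exact hH k _ (degree_le_natDegree.trans_lt (by simpa [(hmonic j).natDegree_eq] using hjk))
  · rw [mul_comm]
    exact hH j _ (degree_le_natDegree.trans_lt (by simpa [(hmonic k).natDegree_eq] using hjk))

theorem IsOrthogonalFamily.apply_mul_eq_coeff_mul {n : ℕ} {p : R[X]} (hp : p.natDegree ≤ n) :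
    L (H n * p) = p.coeff n * L (H n * H n) := by
  nontriviality R
  have hlow : (p - C (p.coeff n) * H n).degree < n := by
    rw [degree_lt_iff_coeff_zero]
    intro m hm
    rcases hm.lt_or_eq with hm | rfl
    · rw [coeff_sub, coeff_C_mul, coeff_eq_zero_of_natDegree_lt (hp.trans_lt hm),
        coeff_eq_zero_of_natDegree_lt ((hmonic n).natDegree_eq.trans_lt hm), mul_zero, sub_zero]
    · rw [coeff_sub, coeff_C_mul, (hmonic _).coeff_eq (isMonicOfDegree_X_pow R _) le_rfl,
        coeff_X_pow_self, mul_one, sub_self]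
  have hsplit : H n * p = C (p.coeff n) * (H n * H n) + H n * (p - C (p.coeff n) * H n) := by ring
  rw [hsplit, map_add, hH n _ hlow, add_zero, ← smul_eq_C_mul, map_smul, smul_eq_mul]

theorem IsOrthogonalFamily.apply_mul_self_succ (γ : ℕ → R)
    (hrec : ∀ n, H (n + 2) = X * H (n + 1) - C (γ n) * H n) (n : ℕ) :
    L (H (n + 1) * H (n + 1)) = γ n * L (H n * H n) := by
  have hXpow : ∀ k, L (H k * X ^ k) = L (H k * H k) := fun k => by
    simpa using hH.apply_mul_eq_coeff_mul hmonic (natDegree_X_pow_le k)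
  rw [← hXpow, mul_X_pow_succ_eq_of_recurrence γ hrec, map_add,
    hH _ _ ((degree_X_pow_le n).trans_lt (by exact_mod_cast (by omega : n < n + 2))),
    ← smul_eq_C_mul, map_smul, hXpow, zero_add, smul_eq_mul]

theorem IsOrthogonalFamily.apply_mul_self_pos [LinearOrder R] [IsStrictOrderedRing R]
    (γ : ℕ → R) (hrec : ∀ n, H (n + 2) = X * H (n + 1) - C (γ n) * H n) (hγ : ∀ n, 0 < γ n)
    (h0 : 0 < L (H 0 * H 0)) (n : ℕ) : 0 < L (H n * H n) := by
  induction n with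
  | zero => exact h0
  | succ n ih => rw [hH.apply_mul_self_succ hmonic γ hrec]; exact mul_pos (hγ n) ih

end Orthogonality

section Sobolev

variable {K : Type*} [Field K] {L : K[X] →ₗ[K] K} {H : ℕ → K[X]}

/-- With `δ p = (D_q p)(α)` this is the kernel `K^{(0,1)}_{n,q}(·, α)`. -/
noncomputable def reproducingKernel (L : K[X] →ₗ[K] K) (H : ℕ → K[X]) (δ : K[X] →ₗ[K] K)
    (n : ℕ) : K[X] :=
  ∑ k ∈ range (n + 1), C (δ (H k) / L (H k * H k)) * H k

theorem apply_reproducingKernel (δ : K[X] →ₗ[K] K) (n : ℕ) :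
    δ (reproducingKernel L H δ n) = ∑ k ∈ range (n + 1), δ (H k) ^ 2 / L (H k * H k) := by
  simp_rw [reproducingKernel, map_sum, ← smul_eq_C_mul, map_smul, smul_eq_mul]
  exact sum_congr rfl fun k _ => by ring

variable (hH : IsOrthogonalFamily L H) (hmonic : ∀ n, IsMonicOfDegree (H n) n)
  (hnorm : ∀ n, L (H n * H n) ≠ 0)
include hH hmonic hnorm

theorem IsOrthogonalFamily.eq_zero_of_forall_apply_mul {n : ℕ} {p : K[X]} (hp : p.natDegree ≤ n)
    (horth : ∀ k ≤ n, L (H k * p) = 0) : p = 0 := by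
  by_contra hp0
  have hlead := hH.apply_mul_eq_coeff_mul hmonic le_rfl (p := p)
  rw [horth _ hp, coeff_natDegree, zero_eq_mul] at hlead
  exact hlead.elim (leadingCoeff_ne_zero.mpr hp0) (hnorm _)

theorem IsOrthogonalFamily.apply_mul_reproducingKernel (δ : K[X] →ₗ[K] K) {n k : ℕ}
    (hk : k ≤ n) : L (H k * reproducingKernel L H δ n) = δ (H k) := by
  simp_rw [reproducingKernel, mul_sum, map_sum, mul_left_comm (H k), ← smul_eq_C_mul, map_smul,
    smul_eq_mul]
  rw [sum_eq_single_of_mem k (mem_range.mpr (by omega)) fun j _ hjk => by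
    rw [hH.apply_mul_eq_zero hmonic hjk, mul_zero], div_mul_cancel₀ _ (hnorm k)]

theorem IsOrthogonalFamily.eq_sub_reproducingKernel (δ : K[X] →ₗ[K] K) (lam : K) {n : ℕ}
    {S : K[X]} (hS : IsMonicOfDegree S (n + 1))
    (hSorth : ∀ k ≤ n, L (S * H k) + lam * δ S * δ (H k) = 0) :
    S = H (n + 1) - C (lam * δ S) * reproducingKernel L H δ n := by
  set κ := reproducingKernel L H δ n
  have hκdeg : κ.natDegree ≤ n := natDegree_sum_le_of_forall_le _ _ fun k hk =>
    (natDegree_C_mul_le _ _).trans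
      ((hmonic k).natDegree_eq.trans_le (by simpa [Nat.lt_succ_iff] using hk))
  have hzero : S - H (n + 1) + C (lam * δ S) * κ = 0 := by
    refine hH.eq_zero_of_forall_apply_mul hmonic hnorm (n := n) ?_ fun k hk => ?_
    · refine natDegree_add_le_of_degree_le ?_ ((natDegree_C_mul_le _ _).trans hκdeg)
      exact Nat.le_of_lt_succ ((hS.natDegree_sub_lt (by omega) (hmonic _)))
    · rw [mul_add, mul_sub, map_add, map_sub, mul_left_comm, ← smul_eq_C_mul, map_smul,
        hH.apply_mul_reproducingKernel hmonic hnorm δ hk, hH.apply_mul_eq_zero hmonic (by omega),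
        mul_comm (H k), smul_eq_mul]
      linear_combination hSorth k hk
  linear_combination hzero

theorem IsOrthogonalFamily.eq_sub_smul_reproducingKernel (δ : K[X] →ₗ[K] K) (lam : K) {n : ℕ}
    {S : K[X]} (hS : IsMonicOfDegree S (n + 1))
    (hSorth : ∀ k ≤ n, L (S * H k) + lam * δ S * δ (H k) = 0)
    (hden : 1 + lam * ∑ k ∈ range (n + 1), δ (H k) ^ 2 / L (H k * H k) ≠ 0) :
    S = H (n + 1) - C (lam * δ (H (n + 1)) /
      (1 + lam * ∑ k ∈ range (n + 1), δ (H k) ^ 2 / L (H k * H k))) *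
        reproducingKernel L H δ n := by
  have hS' := hH.eq_sub_reproducingKernel hmonic hnorm δ lam hS hSorth
  have hδS := congrArg δ hS'
  rw [map_sub, ← smul_eq_C_mul, map_smul, apply_reproducingKernel, smul_eq_mul] at hδS
  convert hS' using 4
  field_simp
  linear_combination -lam * hδS

end Sobolev

section QDerivative

variable {K : Type*} [Field K] {q : K} {D : K[X] → K[X]}

theorem injective_C_sub_one_mul_X_mul (hq : q ≠ 1) : Function.Injective (C (q - 1) * X * ·) :=
  mul_right_injective₀ (mul_ne_zero (C_ne_zero.mpr (sub_ne_zero.mpr hq)) X_ne_zero)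

def IsQDeriv (q : K) (D : K[X] → K[X]) : Prop :=
  ∀ p, C (q - 1) * X * D p = p.comp (C q * X) - p

namespace IsQDeriv

variable (hD : IsQDeriv q D) (hq : q ≠ 1)
include hD hq

theorem map_add (p r : K[X]) : D (p + r) = D p + D r :=
  injective_C_sub_one_mul_X_mul hq <| by
    simp only
    rw [hD, mul_add, hD, hD, add_comp]
    ring

theorem map_C_mul (c : K) (p : K[X]) : D (C c * p) = C c * D p :=
  injective_C_sub_one_mul_X_mul hq <| by
    simp only
    rw [hD, mul_comp, C_comp]
    linear_combination (-C c) * hD p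

noncomputable def toLinearMap : K[X] →ₗ[K] K[X] where
  toFun := D
  map_add' := hD.map_add hq
  map_smul' c p := by simpa [smul_eq_C_mul] using hD.map_C_mul hq c p

@[simp]
theorem toLinearMap_apply (p : K[X]) : hD.toLinearMap hq p = D p :=
  rfl

theorem map_sub (p r : K[X]) : D (p - r) = D p - D r :=
  (hD.toLinearMap hq).map_sub p r

theorem apply_one : D 1 = 0 :=
  injective_C_sub_one_mul_X_mul hq <| by
    simp only
    rw [hD, one_comp, sub_self, mul_zero]

theorem apply_X_mul (p : K[X]) : D (X * p) = p + C q * X * D p :=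
  injective_C_sub_one_mul_X_mul hq <| by
    simp only
    rw [hD, mul_comp, X_comp]
    have hC : C (q - 1) = C q - 1 := by rw [C_sub, C_1]
    linear_combination (-(C q * X)) * hD p - (X * p) * hC

theorem apply_X : D X = 1 := by
  simpa [hD.apply_one hq] using hD.apply_X_mul hq 1

omit hq in
theorem eval_eq (p : K[X]) (x : K) :
    (q - 1) * x * (D p).eval x = p.eval (q * x) - p.eval x := by
  simpa using congrArg (eval x) (hD p)

theorem apply_qHermite_succ {H : ℕ → K[X]} (hH0 : H 0 = 1) (hH1 : H 1 = X)
    (hrec : ∀ n, H (n + 2) = X * H (n + 1) - C (q ^ n * (1 - q ^ (n + 1))) * H n) (n : ℕ) :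
    D (H (n + 1)) = C ((1 - q ^ (n + 1)) / (1 - q)) * H n := by
  have h1q : 1 - q ≠ 0 := sub_ne_zero.mpr hq.symm
  induction n using Nat.twoStepInduction with
  | zero => simp [hH0, hH1, hD.apply_X hq, h1q]
  | one =>
    have h2 : H 2 = X * X - C (1 - q) := by simpa [hH0, hH1] using hrec 0
    have hC : C ((1 - q ^ 2) / (1 - q)) = 1 + C q := by
      rw [← C_1, ← C_add]
      congr 1
      field_simp
      ring
    rw [h2, ← mul_one (C (1 - q)), hD.map_sub hq, hD.map_C_mul hq, hD.apply_one hq,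
      hD.apply_X_mul hq, hD.apply_X hq, hH1, hC]
    ring
  | more n ih0 ih1 =>
    have hXH : X * H (n + 1) = H (n + 2) + C (q ^ n * (1 - q ^ (n + 1))) * H n := by
      rw [hrec]
      ring
    have E1 : (1 : K[X]) + C q * C ((1 - q ^ (n + 2)) / (1 - q)) =
        C ((1 - q ^ (n + 3)) / (1 - q)) := by
      rw [← C_mul, ← C_1, ← C_add]
      congr 1
      field_simp
      ring
    have E2 : C q * C ((1 - q ^ (n + 2)) / (1 - q)) * C (q ^ n * (1 - q ^ (n + 1))) =
        C (q ^ (n + 1) * (1 - q ^ (n + 2))) * C ((1 - q ^ (n + 1)) / (1 - q)) := by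
      simp only [← C_mul]
      congr 1
      field_simp
      ring
    rw [hrec, hD.map_sub hq, hD.map_C_mul hq, hD.apply_X_mul hq, ih1, ih0]
    linear_combination (C q * C ((1 - q ^ (n + 2)) / (1 - q))) * hXH + H (n + 2) * E1 + H n * E2

theorem apply_qHermite_succ_eq_zero {H : ℕ → K[X]} (hH0 : H 0 = 1) (hH1 : H 1 = X)
    (hrec : ∀ n, H (n + 2) = X * H (n + 1) - C (q ^ n * (1 - q ^ (n + 1))) * H n)
    {L : K[X] →ₗ[K] K} (hibp : ∀ p, L (X * p) = (1 - q) * L (D p)) (n : ℕ) :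
    L (H (n + 1)) = 0 := by
  have hstep : ∀ n, L (H (n + 2)) = (1 - q ^ (n + 1)) * (1 - q ^ n) * L (H n) := fun n => by
    have h1q : 1 - q ≠ 0 := sub_ne_zero.mpr hq.symm
    rw [hrec, L.map_sub, hibp, hD.apply_qHermite_succ hq hH0 hH1 hrec, ← smul_eq_C_mul,
      ← smul_eq_C_mul, map_smul, map_smul, smul_eq_mul, smul_eq_mul]
    field_simp
  induction n using Nat.twoStepInduction with
  | zero => rw [hH1, ← mul_one X, hibp, hD.apply_one hq, map_zero, mul_zero]
  | one => rw [hstep, pow_zero, sub_self, mul_zero, zero_mul]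
  | more n ih0 _ => rw [hstep, ih0, mul_zero]

theorem isOrthogonalFamily_qHermite {H : ℕ → K[X]} (hH0 : H 0 = 1) (hH1 : H 1 = X)
    (hrec : ∀ n, H (n + 2) = X * H (n + 1) - C (q ^ n * (1 - q ^ (n + 1))) * H n)
    {L : K[X] →ₗ[K] K} (hibp : ∀ p, L (X * p) = (1 - q) * L (D p)) :
    IsOrthogonalFamily L H :=
  isOrthogonalFamily_of_recurrence _ hrec (hD.apply_qHermite_succ_eq_zero hq hH0 hH1 hrec hibp)

end IsQDeriv

end QDerivative

end Polynomial

open Set Topology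

theorem tsum_sub_succ_eq_of_tendsto {G : Type*} [AddCommGroup G] [TopologicalSpace G]
    [IsTopologicalAddGroup G] [T2Space G] {g : ℕ → G} {l : G}
    (hs : Summable fun k => g k - g (k + 1)) (hg : Tendsto g atTop (𝓝 l)) :
    ∑' k, (g k - g (k + 1)) = g 0 - l := by
  refine (hs.hasSum_iff_tendsto_nat.mpr ?_).tsum_eq
  simp_rw [Finset.sum_range_sub']
  exact tendsto_const_nhds.sub hg

/-- Jackson's q-integral `∫_{-1}^1 f(x) d_q x`. -/
noncomputable def jacksonIntegral (q : ℝ) (f : ℝ → ℝ) : ℝ :=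
  (1 - q) * ∑' k : ℕ, q ^ k * (f (q ^ k) + f (-q ^ k))

section Jackson

variable {q : ℝ}

theorem pow_mem_Icc_neg_one_one (hq0 : 0 ≤ q) (hq1 : q ≤ 1) (k : ℕ) :
    q ^ k ∈ Icc (-1 : ℝ) 1 :=
  ⟨by linarith [pow_nonneg hq0 k], pow_le_one₀ hq0 hq1⟩

theorem neg_pow_mem_Icc_neg_one_one (hq0 : 0 ≤ q) (hq1 : q ≤ 1) (k : ℕ) :
    -q ^ k ∈ Icc (-1 : ℝ) 1 := by
  simpa [neg_le, and_comm] using pow_mem_Icc_neg_one_one hq0 hq1 k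

theorem summable_jacksonIntegral (hq0 : 0 ≤ q) (hq1 : q < 1) {f : ℝ → ℝ}
    (hf : ∃ M, ∀ x ∈ Icc (-1 : ℝ) 1, |f x| ≤ M) :
    Summable fun k : ℕ => q ^ k * (f (q ^ k) + f (-q ^ k)) := by
  obtain ⟨M, hM⟩ := hf
  refine Summable.of_norm_bounded ((summable_geometric_of_lt_one hq0 hq1).mul_left (2 * M))
    fun k => ?_
  have h1 := hM _ (pow_mem_Icc_neg_one_one hq0 hq1.le k)
  have h2 := hM _ (neg_pow_mem_Icc_neg_one_one hq0 hq1.le k)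
  rw [Real.norm_eq_abs, abs_mul, abs_of_nonneg (pow_nonneg hq0 k)]
  nlinarith [abs_add_le (f (q ^ k)) (f (-q ^ k)), pow_nonneg hq0 k]

theorem jacksonIntegral_add (hq0 : 0 ≤ q) (hq1 : q < 1) {f g : ℝ → ℝ}
    (hf : ∃ M, ∀ x ∈ Icc (-1 : ℝ) 1, |f x| ≤ M) (hg : ∃ M, ∀ x ∈ Icc (-1 : ℝ) 1, |g x| ≤ M) :
    jacksonIntegral q (fun x => f x + g x) = jacksonIntegral q f + jacksonIntegral q g := by
  rw [jacksonIntegral, jacksonIntegral, jacksonIntegral, ← mul_add,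
    ← (summable_jacksonIntegral hq0 hq1 hf).tsum_add (summable_jacksonIntegral hq0 hq1 hg)]
  congr 1
  exact tsum_congr fun k => by ring

theorem jacksonIntegral_const_mul (c : ℝ) (f : ℝ → ℝ) :
    jacksonIntegral q (fun x => c * f x) = c * jacksonIntegral q f := by
  rw [jacksonIntegral, jacksonIntegral, mul_left_comm c, ← tsum_mul_left (a := c)]
  congr 1
  exact tsum_congr fun k => by ring

theorem exists_bound_eval_mul {w : ℝ → ℝ} (hw : ∃ M, ∀ x ∈ Icc (-1 : ℝ) 1, |w x| ≤ M)
    (p : ℝ[X]) : ∃ M, ∀ x ∈ Icc (-1 : ℝ) 1, |p.eval x * w x| ≤ M := by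
  obtain ⟨M, hM⟩ := hw
  obtain ⟨N, hN⟩ := (isCompact_Icc (a := (-1 : ℝ)) (b := 1)).exists_bound_of_continuousOn
    p.continuous.continuousOn
  refine ⟨N * M, fun x hx => ?_⟩
  rw [abs_mul]
  exact mul_le_mul (hN x hx) (hM x hx) (abs_nonneg _) ((norm_nonneg _).trans (hN x hx))

noncomputable def jacksonFunctional (hq0 : 0 ≤ q) (hq1 : q < 1) {w : ℝ → ℝ}
    (hw : ∃ M, ∀ x ∈ Icc (-1 : ℝ) 1, |w x| ≤ M) : ℝ[X] →ₗ[ℝ] ℝ where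
  toFun p := jacksonIntegral q fun x => p.eval x * w x
  map_add' p r := by
    simpa [add_mul] using jacksonIntegral_add hq0 hq1 (exists_bound_eval_mul hw p)
      (exists_bound_eval_mul hw r)
  map_smul' c p := by simpa [mul_assoc] using jacksonIntegral_const_mul c _

theorem jacksonFunctional_apply (hq0 : 0 ≤ q) (hq1 : q < 1) {w : ℝ → ℝ}
    (hw : ∃ M, ∀ x ∈ Icc (-1 : ℝ) 1, |w x| ≤ M) (p : ℝ[X]) :
    jacksonFunctional hq0 hq1 hw p = jacksonIntegral q fun x => p.eval x * w x :=
  rfl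

theorem summable_jacksonFunctional (hq0 : 0 ≤ q) (hq1 : q < 1) {w : ℝ → ℝ}
    (hw : ∃ M, ∀ x ∈ Icc (-1 : ℝ) 1, |w x| ≤ M) (p : ℝ[X]) :
    Summable fun k : ℕ => q ^ k * (p.eval (q ^ k) * w (q ^ k) + p.eval (-q ^ k) * w (-q ^ k)) :=
  summable_jacksonIntegral (f := fun x => p.eval x * w x) hq0 hq1 (exists_bound_eval_mul hw p)

theorem jacksonFunctional_one_pos (hq0 : 0 < q) (hq1 : q < 1) {w : ℝ → ℝ}
    (hw : ∃ M, ∀ x ∈ Icc (-1 : ℝ) 1, |w x| ≤ M) (hwpos : ∀ x ∈ Icc (-1 : ℝ) 1, 0 < w x) :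
    0 < jacksonFunctional hq0.le hq1 hw 1 := by
  have hpos : ∀ k : ℕ, 0 < q ^ k * (eval (q ^ k) 1 * w (q ^ k) + eval (-q ^ k) 1 * w (-q ^ k)) :=
    fun k => by
      simpa using mul_pos (pow_pos hq0 k) (add_pos
        (hwpos _ (pow_mem_Icc_neg_one_one hq0.le hq1.le k))
        (hwpos _ (neg_pow_mem_Icc_neg_one_one hq0.le hq1.le k)))
  exact mul_pos (by linarith) ((summable_jacksonFunctional hq0.le hq1 hw 1).tsum_pos
    (fun k => (hpos k).le) 0 (hpos 0))

theorem tendsto_one_sub_sq_mul_eval_sub_eval_neg_mul (hq0 : 0 ≤ q) (hq1 : q < 1) {w : ℝ → ℝ}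
    (hw : ∃ M, ∀ x ∈ Icc (-1 : ℝ) 1, |w x| ≤ M) (p : ℝ[X]) :
    Tendsto (fun k : ℕ => (1 - (q ^ k) ^ 2) * (p.eval (q ^ k) - p.eval (-q ^ k)) * w (q ^ k))
      atTop (𝓝 0) := by
  obtain ⟨M, hM⟩ := hw
  have hqk := tendsto_pow_atTop_nhds_zero_of_lt_one hq0 hq1
  have hdiff : Tendsto (fun k : ℕ => p.eval (q ^ k) - p.eval (-q ^ k)) atTop (𝓝 0) := by
    simpa using ((p.continuous.tendsto 0).comp hqk).sub
      ((p.continuous.tendsto 0).comp (neg_zero (G := ℝ) ▸ hqk.neg))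
  refine squeeze_zero_norm (fun k => ?_) (by simpa using hdiff.norm.const_mul M)
  have hsq : |1 - (q ^ k) ^ 2| ≤ 1 := by
    have := pow_le_one₀ (pow_nonneg hq0 k) (pow_le_one₀ hq0 hq1.le (n := k)) (n := 2)
    rw [abs_le]
    constructor <;> nlinarith [sq_nonneg (q ^ k)]
  simp only [Real.norm_eq_abs, abs_mul]
  calc |1 - (q ^ k) ^ 2| * |p.eval (q ^ k) - p.eval (-q ^ k)| * |w (q ^ k)|
      ≤ 1 * |p.eval (q ^ k) - p.eval (-q ^ k)| * M := by
        gcongr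
        exact hM _ (pow_mem_Icc_neg_one_one hq0 hq1.le k)
    _ = M * |p.eval (q ^ k) - p.eval (-q ^ k)| := by ring

/-- The terms telescope thanks to `hwq`; evenness of `w` lets the boundary terms at `±q^k` cancel
in the limit. -/
theorem jacksonFunctional_X_mul (hq0 : 0 ≤ q) (hq1 : q < 1) {w : ℝ → ℝ}
    (hw : ∃ M, ∀ x ∈ Icc (-1 : ℝ) 1, |w x| ≤ M) (hweven : ∀ x, w (-x) = w x)
    (hwq : ∀ x, w x = (1 - (q * x) ^ 2) * w (q * x)) {D : ℝ[X] → ℝ[X]} (hD : IsQDeriv q D)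
    (p : ℝ[X]) :
    jacksonFunctional hq0 hq1 hw (X * p) = (1 - q) * jacksonFunctional hq0 hq1 hw (D p) := by
  set a : ℕ → ℝ := fun k =>
    q ^ k * ((D p).eval (q ^ k) * w (q ^ k) + (D p).eval (-q ^ k) * w (-q ^ k))
  set b : ℕ → ℝ := fun k =>
    q ^ k * ((X * p).eval (q ^ k) * w (q ^ k) + (X * p).eval (-q ^ k) * w (-q ^ k))
  set G : ℕ → ℝ := fun k => (1 - (q ^ k) ^ 2) * (p.eval (q ^ k) - p.eval (-q ^ k)) * w (q ^ k)
  have hkey : ∀ k, (1 - q) * a k = G k - G (k + 1) + b k := fun k => by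
    have e1 := hD.eval_eq p (q ^ k)
    have e2 := hD.eval_eq p (-q ^ k)
    have e3 := hwq (q ^ k)
    rw [← pow_succ'] at e1 e3
    rw [show q * -q ^ k = -q ^ (k + 1) by ring] at e2
    simp only [a, b, G, eval_mul, eval_X, hweven]
    linear_combination (-w (q ^ k)) * e1 + w (q ^ k) * e2 -
      (p.eval (q ^ (k + 1)) - p.eval (-q ^ (k + 1))) * e3
  have hG : Tendsto G atTop (𝓝 0) := tendsto_one_sub_sq_mul_eval_sub_eval_neg_mul hq0 hq1 hw p
  have hsa : Summable a := summable_jacksonFunctional hq0 hq1 hw (D p)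
  have hsb : Summable b := summable_jacksonFunctional hq0 hq1 hw (X * p)
  have hsG : Summable fun k => G k - G (k + 1) :=
    ((hsa.mul_left (1 - q)).sub hsb).congr fun k => by rw [hkey]; ring
  have hba : ∑' k, b k = (1 - q) * ∑' k, a k := by
    rw [← tsum_mul_left, tsum_congr hkey, hsG.tsum_add hsb,
      tsum_sub_succ_eq_of_tendsto hsG hG]
    simp [G]
  exact congrArg ((1 - q) * ·) hba

end Jackson

section QHermiteWeight

variable {q : ℝ}

/-- The weight `(q x; q)_∞ (-q x; q)_∞` of the q-Hermite I polynomials. -/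
noncomputable def qHermiteWeight (q x : ℝ) : ℝ :=
  (∏' j : ℕ, (1 - x * q ^ (j + 1))) * ∏' j : ℕ, (1 + x * q ^ (j + 1))

theorem summable_mul_pow_succ (hq0 : 0 ≤ q) (hq1 : q < 1) (y : ℝ) :
    Summable fun j : ℕ => y * q ^ (j + 1) :=
  ((summable_geometric_of_lt_one hq0 hq1).mul_left (y * q)).congr fun j => by ring

theorem tprod_one_add_mul_pow_succ_eq (hq0 : 0 ≤ q) (hq1 : q < 1) (y : ℝ) :
    ∏' j : ℕ, (1 + y * q ^ (j + 1)) = (1 + y * q) * ∏' j : ℕ, (1 + q * y * q ^ (j + 1)) := by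
  rw [tprod_eq_zero_mul' ((Real.multipliable_one_add_of_summable
    (summable_mul_pow_succ hq0 hq1 (q * y))).congr fun j => by ring)]
  simp only [zero_add, pow_one]
  congr 1
  exact tprod_congr fun j => by ring

theorem one_add_mul_pow_succ_pos (hq0 : 0 ≤ q) (hq1 : q < 1) {y : ℝ} (hy : |y| ≤ 1) (j : ℕ) :
    0 < 1 + y * q ^ (j + 1) := by
  have hqj : q ^ (j + 1) < 1 := pow_lt_one₀ hq0 hq1 (by omega)
  have : |y * q ^ (j + 1)| < 1 := by
    rw [abs_mul, abs_of_nonneg (pow_nonneg hq0 _)]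
    nlinarith [abs_nonneg y, pow_nonneg hq0 (j + 1)]
  linarith [neg_abs_le (y * q ^ (j + 1))]

theorem exp_tsum_log_eq_tprod_one_add_mul_pow_succ (hq0 : 0 ≤ q) (hq1 : q < 1) {y : ℝ}
    (hy : |y| ≤ 1) :
    Real.exp (∑' j : ℕ, Real.log (1 + y * q ^ (j + 1))) = ∏' j : ℕ, (1 + y * q ^ (j + 1)) :=
  Real.rexp_tsum_eq_tprod (one_add_mul_pow_succ_pos hq0 hq1 hy)
    (Real.summable_log_one_add_of_summable (summable_mul_pow_succ hq0 hq1 y))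

theorem tprod_one_add_mul_pow_succ_pos (hq0 : 0 ≤ q) (hq1 : q < 1) {y : ℝ} (hy : |y| ≤ 1) :
    0 < ∏' j : ℕ, (1 + y * q ^ (j + 1)) := by
  rw [← exp_tsum_log_eq_tprod_one_add_mul_pow_succ hq0 hq1 hy]
  exact Real.exp_pos _

theorem tprod_one_add_mul_pow_succ_le (hq0 : 0 ≤ q) (hq1 : q < 1) {y : ℝ} (hy : |y| ≤ 1) :
    ∏' j : ℕ, (1 + y * q ^ (j + 1)) ≤ Real.exp (q / (1 - q)) := by
  rw [← exp_tsum_log_eq_tprod_one_add_mul_pow_succ hq0 hq1 hy, Real.exp_le_exp]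
  have hgeom : ∑' j : ℕ, y * q ^ (j + 1) = y * (q / (1 - q)) := by
    simp_rw [pow_succ', ← mul_assoc, tsum_mul_left, tsum_geometric_of_lt_one hq0 hq1]
    ring
  calc ∑' j : ℕ, Real.log (1 + y * q ^ (j + 1))
      ≤ ∑' j : ℕ, y * q ^ (j + 1) :=
        (Real.summable_log_one_add_of_summable (summable_mul_pow_succ hq0 hq1 y)).tsum_le_tsum
          (fun j => by
            linarith [Real.log_le_sub_one_of_pos (one_add_mul_pow_succ_pos hq0 hq1 hy j)])
          (summable_mul_pow_succ hq0 hq1 y)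
    _ ≤ q / (1 - q) := by
        rw [hgeom]
        have : 0 ≤ q / (1 - q) := div_nonneg hq0 (by linarith)
        nlinarith [le_abs_self y]

theorem qHermiteWeight_eq_tprod_mul_tprod (x : ℝ) :
    qHermiteWeight q x = (∏' j : ℕ, (1 + -x * q ^ (j + 1))) * ∏' j : ℕ, (1 + x * q ^ (j + 1)) := by
  rw [qHermiteWeight]
  congr 1
  exact tprod_congr fun j => by ring

theorem qHermiteWeight_neg (x : ℝ) : qHermiteWeight q (-x) = qHermiteWeight q x := by
  rw [qHermiteWeight_eq_tprod_mul_tprod, qHermiteWeight_eq_tprod_mul_tprod, neg_neg, mul_comm]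

theorem qHermiteWeight_eq_mul (hq0 : 0 ≤ q) (hq1 : q < 1) (x : ℝ) :
    qHermiteWeight q x = (1 - (q * x) ^ 2) * qHermiteWeight q (q * x) := by
  rw [qHermiteWeight_eq_tprod_mul_tprod, qHermiteWeight_eq_tprod_mul_tprod,
    tprod_one_add_mul_pow_succ_eq hq0 hq1, tprod_one_add_mul_pow_succ_eq hq0 hq1 x]
  ring_nf

theorem qHermiteWeight_pos (hq0 : 0 ≤ q) (hq1 : q < 1) {x : ℝ} (hx : x ∈ Icc (-1 : ℝ) 1) :
    0 < qHermiteWeight q x := by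
  have hx' : |x| ≤ 1 := abs_le.mpr hx
  rw [qHermiteWeight_eq_tprod_mul_tprod]
  exact mul_pos (tprod_one_add_mul_pow_succ_pos hq0 hq1 (by rwa [abs_neg]))
    (tprod_one_add_mul_pow_succ_pos hq0 hq1 hx')

theorem exists_bound_qHermiteWeight (hq0 : 0 ≤ q) (hq1 : q < 1) :
    ∃ M, ∀ x ∈ Icc (-1 : ℝ) 1, |qHermiteWeight q x| ≤ M := by
  refine ⟨Real.exp (q / (1 - q)) * Real.exp (q / (1 - q)), fun x hx => ?_⟩
  have hx' : |x| ≤ 1 := abs_le.mpr hx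
  have hx'' : |-x| ≤ 1 := by rwa [abs_neg]
  rw [abs_of_pos (qHermiteWeight_pos hq0 hq1 hx), qHermiteWeight_eq_tprod_mul_tprod]
  exact mul_le_mul (tprod_one_add_mul_pow_succ_le hq0 hq1 hx'')
    (tprod_one_add_mul_pow_succ_le hq0 hq1 hx') (tprod_one_add_mul_pow_succ_pos hq0 hq1 hx').le
    (Real.exp_pos _).le

theorem isOrthogonalFamily_qHermite_jacksonFunctional (hq0 : 0 ≤ q) (hq1 : q < 1)
    {D : ℝ[X] → ℝ[X]} (hD : IsQDeriv q D) {H : ℕ → ℝ[X]} (hH0 : H 0 = 1) (hH1 : H 1 = X)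
    (hrec : ∀ n, H (n + 2) = X * H (n + 1) - C (q ^ n * (1 - q ^ (n + 1))) * H n) :
    IsOrthogonalFamily (jacksonFunctional hq0 hq1 (exists_bound_qHermiteWeight hq0 hq1)) H :=
  hD.isOrthogonalFamily_qHermite hq1.ne hH0 hH1 hrec (jacksonFunctional_X_mul hq0 hq1 _
    qHermiteWeight_neg (qHermiteWeight_eq_mul hq0 hq1) hD)

theorem jacksonFunctional_qHermite_mul_self_pos (hq0 : 0 < q) (hq1 : q < 1)
    {H : ℕ → ℝ[X]} (hH0 : H 0 = 1) (hH1 : H 1 = X)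
    (hrec : ∀ n, H (n + 2) = X * H (n + 1) - C (q ^ n * (1 - q ^ (n + 1))) * H n)
    (horth : IsOrthogonalFamily
      (jacksonFunctional hq0.le hq1 (exists_bound_qHermiteWeight hq0.le hq1)) H) (k : ℕ) :
    0 < jacksonFunctional hq0.le hq1 (exists_bound_qHermiteWeight hq0.le hq1) (H k * H k) :=
  horth.apply_mul_self_pos (isMonicOfDegree_of_recurrence _ hH0 hH1 hrec) _ hrec
    (fun k => mul_pos (pow_pos hq0 k) (sub_pos.mpr (pow_lt_one₀ hq0.le hq1 (by omega))))
    (by simpa [hH0] using jacksonFunctional_one_pos hq0 hq1 _ fun x hx =>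
      qHermiteWeight_pos hq0.le hq1 hx) k

end QHermiteWeight

theorem qHermite_sobolev_connection_general (q : ℝ) (hq0 : 0 < q) (hq1 : q < 1)
    (lam : ℝ) (hlam : 0 < lam) (α : ℝ)
    (H : ℕ → Polynomial ℝ) (hH0 : H 0 = 1) (hH1 : H 1 = X)
    (hHrec : ∀ n : ℕ, H (n + 2) = X * H (n + 1) - C (q ^ (n + 1 - 1) * (1 - q ^ (n + 1))) * H n)
    (Dq : Polynomial ℝ → Polynomial ℝ)
    (hDq : ∀ p : Polynomial ℝ, C (q - 1) * X * Dq p = p.comp (C q * X) - p)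
    (w : ℝ → ℝ)
    (hw : ∀ x : ℝ, w x = (∏' j : ℕ, (1 - x * q ^ (j + 1))) * (∏' j : ℕ, (1 + x * q ^ (j + 1))))
    (inner : Polynomial ℝ → Polynomial ℝ → ℝ)
    (hinner : ∀ f g : Polynomial ℝ, inner f g =
      (1 - q) * ∑' k : ℕ, q ^ k *
        (f.eval (q ^ k) * g.eval (q ^ k) * w (q ^ k) +
          f.eval (-(q ^ k)) * g.eval (-(q ^ k)) * w (-(q ^ k))))
    (h : ℕ → ℝ) (hh : ∀ m : ℕ, h m = inner (H m) (H m))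
    (sInner : Polynomial ℝ → Polynomial ℝ → ℝ)
    (hsInner : ∀ f g : Polynomial ℝ,
      sInner f g = inner f g + lam * (Dq f).eval α * (Dq g).eval α)
    (S : ℕ → Polynomial ℝ)
    (hSmonic : ∀ n : ℕ, (S n).Monic ∧ (S n).natDegree = n)
    (hSorth : ∀ n : ℕ, ∀ p : Polynomial ℝ, p.natDegree < n → sInner (S n) p = 0) :
    ∀ n : ℕ,
      S (n + 1) = H (n + 1) -
        C (lam * ((1 - q ^ (n + 1)) / (1 - q) * (H n).eval α) /
            (1 + lam * ∑ k ∈ Finset.range (n + 1), ((Dq (H k)).eval α) ^ 2 / h k)) *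
          (∑ k ∈ Finset.range (n + 1), C ((Dq (H k)).eval α / h k) * H k) := by
  intro n
  obtain rfl : w = qHermiteWeight q := funext hw
  have hq : q ≠ 1 := hq1.ne
  have hD : IsQDeriv q Dq := hDq
  have hrec : ∀ n, H (n + 2) = X * H (n + 1) - C (q ^ n * (1 - q ^ (n + 1))) * H n := by
    simpa using hHrec
  have hmonic := isMonicOfDegree_of_recurrence _ hH0 hH1 hrec
  set L := jacksonFunctional hq0.le hq1 (exists_bound_qHermiteWeight hq0.le hq1)
  have hinnerL : ∀ f g, inner f g = L (f * g) := fun f g => by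
    rw [hinner, jacksonFunctional_apply, jacksonIntegral]
    simp only [eval_mul]
  have horth : IsOrthogonalFamily L H :=
    isOrthogonalFamily_qHermite_jacksonFunctional hq0.le hq1 hD hH0 hH1 hrec
  have hpos := jacksonFunctional_qHermite_mul_self_pos hq0 hq1 hH0 hH1 hrec horth
  set δ := leval α ∘ₗ hD.toLinearMap hq
  have hSorth' : ∀ k ≤ n, L (S (n + 1) * H k) + lam * δ (S (n + 1)) * δ (H k) = 0 :=
    fun k hk => by
      simpa [hsInner, hinnerL, δ, mul_assoc] using
        hSorth (n + 1) (H k) (by rw [(hmonic k).natDegree_eq]; omega)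
  have hden : 1 + lam * ∑ k ∈ Finset.range (n + 1), δ (H k) ^ 2 / L (H k * H k) ≠ 0 :=
    (add_pos_of_pos_of_nonneg one_pos (mul_nonneg hlam.le (Finset.sum_nonneg fun k _ =>
      div_nonneg (sq_nonneg _) (hpos k).le))).ne'
  have hδH : δ (H (n + 1)) = (1 - q ^ (n + 1)) / (1 - q) * (H n).eval α := by
    simp [δ, hD.apply_qHermite_succ hq hH0 hH1 hrec]
  rw [horth.eq_sub_smul_reproducingKernel hmonic (fun k => (hpos k).ne') δ lam
    ⟨(hSmonic _).2, (hSmonic _).1⟩ hSorth' hden, hδH, reproducingKernel]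
  simp_rw [hh, hinnerL]
  rfl

/-- Connection formula for the q-Hermite I-Sobolev type orthogonal polynomials:
`S_n = H_n - λ ([n]_q H_{n-1}(α) / (1 + λ K_{n-1,q}^{(1,1)}(α,α))) K_{n-1,q}^{(0,1)}(·,α)`,
where `S_n` are the monic polynomials orthogonal with respect to
`⟨f,g⟩_λ = ⟨f,g⟩ + λ (D_q f)(α)(D_q g)(α)`, `⟨·,·⟩` being the q-Hermite I
(Jackson q-integral) inner product, and
`K_{n-1,q}^{(i,j)}(x,y) = ∑_{k=0}^{n-1} D_q^i H_k(x) D_q^j H_k(y)/h_k`. -/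
theorem qHermite_sobolev_connection (q : ℝ) (hq0 : 0 < q) (hq1 : q < 1)
    (lam : ℝ) (hlam : 0 < lam) (α : ℝ) (hα : α ∉ Set.Icc (-1 : ℝ) 1)
    (H : ℕ → Polynomial ℝ) (hH0 : H 0 = 1) (hH1 : H 1 = X)
    (hHrec : ∀ n : ℕ, H (n + 2) = X * H (n + 1) - C (q ^ (n + 1 - 1) * (1 - q ^ (n + 1))) * H n)
    (Dq : Polynomial ℝ → Polynomial ℝ)
    (hDq : ∀ p : Polynomial ℝ, C (q - 1) * X * Dq p = p.comp (C q * X) - p)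
    (w : ℝ → ℝ)
    (hw : ∀ x : ℝ, w x = (∏' j : ℕ, (1 - x * q ^ (j + 1))) * (∏' j : ℕ, (1 + x * q ^ (j + 1))))
    (inner : Polynomial ℝ → Polynomial ℝ → ℝ)
    (hinner : ∀ f g : Polynomial ℝ, inner f g =
      (1 - q) * ∑' k : ℕ, q ^ k *
        (f.eval (q ^ k) * g.eval (q ^ k) * w (q ^ k) +
          f.eval (-(q ^ k)) * g.eval (-(q ^ k)) * w (-(q ^ k))))
    (h : ℕ → ℝ) (hh : ∀ m : ℕ, h m = inner (H m) (H m))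
    (sInner : Polynomial ℝ → Polynomial ℝ → ℝ)
    (hsInner : ∀ f g : Polynomial ℝ,
      sInner f g = inner f g + lam * (Dq f).eval α * (Dq g).eval α)
    (S : ℕ → Polynomial ℝ)
    (hSmonic : ∀ n : ℕ, (S n).Monic ∧ (S n).natDegree = n)
    (hSorth : ∀ n : ℕ, ∀ p : Polynomial ℝ, p.natDegree < n → sInner (S n) p = 0) :
    ∀ n : ℕ,
      S (n + 1) = H (n + 1) -
        C (lam * ((1 - q ^ (n + 1)) / (1 - q) * (H n).eval α) /
            (1 + lam * ∑ k ∈ Finset.range (n + 1), ((Dq (H k)).eval α) ^ 2 / h k)) *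
          (∑ k ∈ Finset.range (n + 1), C ((Dq (H k)).eval α / h k) * H k) :=
  qHermite_sobolev_connection_general q hq0 hq1 lam hlam α H hH0 hH1 hHrec Dq hDq w hw inner hinner
    h hh sInner hsInner S hSmonic hSorth
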